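/- Let $n \le q \le p < \infty$, let $h \in L_p(\mathbb{R}^n)$ be nonnegative, and let $d = d_q(\cdot,\cdot:h)$ be the associated geodesic distance. Let $x,y,z \in \mathbb{R}^n$ and $\lambda \ge 1$ with $\|y-z\| \le \lambda\|x-z\|$. Then $d(y,z) \le 32\lambda\, d(x,z)$, and moreover $d(x,z)/\|x-z\| \le 32\lambda\, d(y,z)/\|y-z\|$ (when $x \ne z$ and $y \ne z$). -/

import Mathlib

/-! Write `A(t, r)` for the `q`-mean of the weight over the cube of centre `t` and half-side `r`,
and `M(t, l)` for its supremum over `r ≥ l`. Passing from a cube of half-side `r` to a larger one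
of half-side `s` containing it lowers the mean by at most `(s / r) ^ (n / q) ≤ s / r`, as `n ≤ q`;
so `r · A(c, r)` can only grow. Hence `d(u, t) ≤ δ(u, t) ≤ 2 ‖u - t‖ M(t, ‖u - t‖)`.
Conversely, if the points of a chain from `u` to `t` stay within distance `K` of `t`, with `K`
attained, the chain has length at least `K ≥ ‖u - t‖`, and each of its steps is bounded below
through the cube of half-side `max K ρ` about `t`; this gives `d(u, t) ≥ min(ρ, ‖u - t‖) A(t, ρ)`,
hence `d(u, t) ≥ min(l, ‖u - t‖) M(t, l)`. With `t = z` and `u = x, y`, comparing these bounds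
gives both inequalities. -/

open MeasureTheory ENNReal Metric

noncomputable def cubeSup (n : ℕ) (q : ℝ) (w : (Fin n → ℝ) → ℝ≥0∞) (x y : Fin n → ℝ) : ℝ≥0∞ :=
  ⨆ (c : Fin n → ℝ) (r : ℝ) (_ : 0 < r) (_ : x ∈ closedBall c r) (_ : y ∈ closedBall c r),
    ((∫⁻ u in closedBall c r, w u) / volume (closedBall c r)) ^ (1 / q)

noncomputable def deltaQ (n : ℕ) (q : ℝ) (w : (Fin n → ℝ) → ℝ≥0∞) (x y : Fin n → ℝ) : ℝ≥0∞ :=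
  ENNReal.ofReal ‖x - y‖ * cubeSup n q w x y

noncomputable def geoQ (n : ℕ) (q : ℝ) (w : (Fin n → ℝ) → ℝ≥0∞) (x y : Fin n → ℝ) : ℝ≥0∞ :=
  ⨅ (m : ℕ) (z : ℕ → Fin n → ℝ) (_ : z 0 = x) (_ : z m = y),
    ∑ i ∈ Finset.range m, deltaQ n q w (z i) (z (i + 1))

noncomputable def ballAvg (n : ℕ) (q : ℝ) (w : (Fin n → ℝ) → ℝ≥0∞) (t : Fin n → ℝ) (r : ℝ) : ℝ≥0∞ :=
  ((∫⁻ u in closedBall t r, w u) / volume (closedBall t r)) ^ (1 / q)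

noncomputable def supBallAvg (n : ℕ) (q : ℝ) (w : (Fin n → ℝ) → ℝ≥0∞) (t : Fin n → ℝ) (l : ℝ) :
    ℝ≥0∞ :=
  ⨆ (ρ : ℝ) (_ : 0 < ρ) (_ : l ≤ ρ), ballAvg n q w t ρ

section
variable {n : ℕ} {q : ℝ} (w : (Fin n → ℝ) → ℝ≥0∞)

lemma ofReal_mul_ballAvg_le (hnq : (n : ℝ) ≤ q) {c t : Fin n → ℝ} {r s : ℝ} (hr : 0 < r)
    (hrs : r ≤ s) (hsub : closedBall c r ⊆ closedBall t s) :
    ENNReal.ofReal r * ballAvg n q w c r ≤ ENNReal.ofReal s * ballAvg n q w t s := by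
  have hs : 0 < s := hr.trans_le hrs
  have hq : 0 ≤ 1 / q := one_div_nonneg.2 ((Nat.cast_nonneg n).trans hnq)
  set X := ENNReal.ofReal ((s / r) ^ n)
  have hvol : volume (closedBall c r) * X = volume (closedBall t s) := by
    rw [Real.volume_pi_closedBall c hr.le, Real.volume_pi_closedBall t hs.le,
      ← ENNReal.ofReal_mul (by positivity), Fintype.card_fin, ← mul_pow]
    congr 2
    field_simp
  have hX : X ^ (1 / q) ≤ ENNReal.ofReal (s / r) := by
    rw [ENNReal.ofReal_rpow_of_nonneg (by positivity) hq, ← Real.rpow_natCast,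
      ← Real.rpow_mul (by positivity)]
    refine ENNReal.ofReal_le_ofReal ?_
    conv_rhs => rw [← Real.rpow_one (s / r)]
    refine Real.rpow_le_rpow_of_exponent_le ((one_le_div hr).2 hrs) ?_
    rw [mul_one_div]
    exact div_le_one_of_le₀ hnq ((Nat.cast_nonneg n).trans hnq)
  have hmean : (∫⁻ u in closedBall c r, w u) / volume (closedBall c r) ≤
      (∫⁻ u in closedBall t s, w u) / volume (closedBall t s) * X := by
    have hX0 : X ≠ 0 := by positivity
    rw [← hvol, ← ENNReal.mul_div_right_comm,
      ENNReal.mul_div_mul_right _ _ hX0 ENNReal.ofReal_ne_top]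
    exact ENNReal.div_le_div_right (lintegral_mono_set hsub) _
  calc ENNReal.ofReal r * ballAvg n q w c r
      ≤ ENNReal.ofReal r * (ballAvg n q w t s * ENNReal.ofReal (s / r)) := by
        gcongr
        calc ballAvg n q w c r ≤ _ := ENNReal.rpow_le_rpow hmean hq
          _ = _ := ENNReal.mul_rpow_of_nonneg _ _ hq
          _ ≤ _ := mul_le_mul' le_rfl hX
    _ = ENNReal.ofReal s * ballAvg n q w t s := by
        rw [mul_left_comm, ← ENNReal.ofReal_mul hr.le, mul_div_cancel₀ s hr.ne', mul_comm]

lemma ballAvg_le_cubeSup {t u v : Fin n → ℝ} {ρ : ℝ} (hρ : 0 < ρ) (hu : u ∈ closedBall t ρ)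
    (hv : v ∈ closedBall t ρ) : ballAvg n q w t ρ ≤ cubeSup n q w u v :=
  le_iSup_of_le t <| le_iSup_of_le ρ <| le_iSup_of_le hρ <| le_iSup_of_le hu <|
    le_iSup_of_le hv le_rfl

lemma ballAvg_le_supBallAvg (t : Fin n → ℝ) {l ρ : ℝ} (hρ : 0 < ρ) (hlρ : l ≤ ρ) :
    ballAvg n q w t ρ ≤ supBallAvg n q w t l :=
  le_iSup₂_of_le ρ hρ <| le_iSup_of_le hlρ le_rfl

lemma cubeSup_le_two_mul_supBallAvg (hnq : (n : ℝ) ≤ q) (u t : Fin n → ℝ) :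
    cubeSup n q w u t ≤ 2 * supBallAvg n q w t ‖u - t‖ := by
  refine iSup_le fun c => iSup_le fun r => iSup_le fun hr => iSup_le fun hu => iSup_le fun ht => ?_
  rw [mem_closedBall] at hu ht
  have hsub : closedBall c r ⊆ closedBall t (2 * r) :=
    closedBall_subset_closedBall' (by rw [dist_comm]; linarith)
  have hut : ‖u - t‖ ≤ 2 * r := by
    rw [← dist_eq_norm]; linarith [dist_triangle_right u t c]
  have hscale := ofReal_mul_ballAvg_le w hnq hr (by linarith) hsub
  rw [ENNReal.ofReal_mul zero_le_two, ENNReal.ofReal_ofNat, mul_comm 2, mul_assoc,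
    ENNReal.mul_le_mul_iff_right (by positivity) ENNReal.ofReal_ne_top] at hscale
  exact hscale.trans (by gcongr; exact ballAvg_le_supBallAvg w t (by positivity) hut)

lemma geoQ_le_deltaQ (u t : Fin n → ℝ) : geoQ n q w u t ≤ deltaQ n q w u t := by
  refine iInf_le_of_le 1 (iInf_le_of_le (fun i => if i = 0 then u else t)
    (iInf_le_of_le (by simp) (iInf_le_of_le (by simp) ?_)))
  simp

lemma geoQ_le_norm_mul_supBallAvg (hnq : (n : ℝ) ≤ q) (u t : Fin n → ℝ) :
    geoQ n q w u t ≤ ENNReal.ofReal ‖u - t‖ * (2 * supBallAvg n q w t ‖u - t‖) :=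
  (geoQ_le_deltaQ w u t).trans (mul_le_mul' le_rfl (cubeSup_le_two_mul_supBallAvg w hnq u t))

lemma geoQ_div_norm_le (hnq : (n : ℝ) ≤ q) {u t : Fin n → ℝ} (hut : u ≠ t) :
    geoQ n q w u t / ENNReal.ofReal ‖u - t‖ ≤ 2 * supBallAvg n q w t ‖u - t‖ := by
  have hpos : ENNReal.ofReal ‖u - t‖ ≠ 0 := by simpa [sub_eq_zero] using hut
  rw [ENNReal.div_le_iff hpos ENNReal.ofReal_ne_top, mul_comm]
  exact geoQ_le_norm_mul_supBallAvg w hnq u t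

lemma min_mul_ballAvg_le_sum_deltaQ (hnq : (n : ℝ) ≤ q) (t : Fin n → ℝ) (m : ℕ)
    (zs : ℕ → Fin n → ℝ) (hzm : zs m = t) {ρ : ℝ} (hρ : 0 < ρ) :
    ENNReal.ofReal (min ρ ‖zs 0 - t‖) * ballAvg n q w t ρ ≤
      ∑ i ∈ Finset.range m, deltaQ n q w (zs i) (zs (i + 1)) := by
  obtain ⟨k, hk, hkmax⟩ :=
    Finset.exists_max_image (Finset.range (m + 1)) (fun i => ‖zs i - t‖) ⟨0, by simp⟩
  simp only [Finset.mem_range_succ_iff] at hk hkmax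
  set K := ‖zs k - t‖
  set R := max K ρ
  have hR : 0 < R := hρ.trans_le (le_max_right _ _)
  have hmem : ∀ i ≤ m, zs i ∈ closedBall t R := fun i hi => by
    rw [mem_closedBall, dist_eq_norm]
    exact (hkmax i hi).trans (le_max_left _ _)
  have hlength : K ≤ ∑ i ∈ Finset.range m, ‖zs i - zs (i + 1)‖ := by
    simp only [← dist_eq_norm]
    calc K = dist (zs k) (zs m) := by rw [hzm, dist_eq_norm]
      _ ≤ ∑ i ∈ Finset.Ico k m, dist (zs i) (zs (i + 1)) := dist_le_Ico_sum_dist zs hk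
      _ ≤ ∑ i ∈ Finset.range m, dist (zs i) (zs (i + 1)) :=
          Finset.sum_le_sum_of_subset_of_nonneg
            (Finset.range_eq_Ico m ▸ Finset.Ico_subset_Ico_left (Nat.zero_le k))
            fun _ _ _ => dist_nonneg
  have hscale : ENNReal.ofReal (min ρ K) * ballAvg n q w t ρ ≤
      ENNReal.ofReal K * ballAvg n q w t R := by
    rcases le_total K ρ with hKρ | hρK
    · rw [min_eq_right hKρ, show R = ρ from max_eq_right hKρ]
    · rw [min_eq_left hρK, show R = K from max_eq_left hρK]
      exact ofReal_mul_ballAvg_le w hnq hρ hρK (closedBall_subset_closedBall hρK)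
  calc ENNReal.ofReal (min ρ ‖zs 0 - t‖) * ballAvg n q w t ρ
      ≤ ENNReal.ofReal (min ρ K) * ballAvg n q w t ρ := by
        gcongr; exact hkmax 0 (Nat.zero_le m)
    _ ≤ ENNReal.ofReal K * ballAvg n q w t R := hscale
    _ ≤ ENNReal.ofReal (∑ i ∈ Finset.range m, ‖zs i - zs (i + 1)‖) * ballAvg n q w t R := by
        gcongr
    _ = ∑ i ∈ Finset.range m, ENNReal.ofReal ‖zs i - zs (i + 1)‖ * ballAvg n q w t R := by
        rw [ENNReal.ofReal_sum_of_nonneg fun _ _ => norm_nonneg _, Finset.sum_mul]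
    _ ≤ ∑ i ∈ Finset.range m, deltaQ n q w (zs i) (zs (i + 1)) := by
        refine Finset.sum_le_sum fun i hi => mul_le_mul' le_rfl (ballAvg_le_cubeSup w hR ?_ ?_)
        all_goals rw [Finset.mem_range] at hi; exact hmem _ (by omega)

lemma min_mul_supBallAvg_le_geoQ (hnq : (n : ℝ) ≤ q) (u t : Fin n → ℝ) (l : ℝ) :
    ENNReal.ofReal (min l ‖u - t‖) * supBallAvg n q w t l ≤ geoQ n q w u t := by
  refine le_iInf fun m => le_iInf fun zs => le_iInf fun h0 => le_iInf fun hm => ?_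
  simp only [supBallAvg, ENNReal.mul_iSup]
  refine iSup₂_le fun ρ hρ => iSup_le fun hlρ => ?_
  calc _ ≤ ENNReal.ofReal (min ρ ‖zs 0 - t‖) * ballAvg n q w t ρ := by
        rw [h0]; gcongr
    _ ≤ _ := min_mul_ballAvg_le_sum_deltaQ w hnq t m zs hm hρ

end

theorem stmt_5_general (n : ℕ) (q : ℝ) (hq : (n : ℝ) ≤ q)
    (h : (Fin n → ℝ) → ℝ)
    (x y z : Fin n → ℝ) (lam : ℝ) (hlam : 1 ≤ lam)
    (hyz : ‖y - z‖ ≤ lam * ‖x - z‖) :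
    geoQ n q (fun u => ENNReal.ofReal (h u) ^ q) y z ≤
        ENNReal.ofReal (32 * lam) * geoQ n q (fun u => ENNReal.ofReal (h u) ^ q) x z ∧
      (x ≠ z → y ≠ z →
        geoQ n q (fun u => ENNReal.ofReal (h u) ^ q) x z / ENNReal.ofReal ‖x - z‖ ≤
          ENNReal.ofReal (32 * lam) *
            (geoQ n q (fun u => ENNReal.ofReal (h u) ^ q) y z / ENNReal.ofReal ‖y - z‖)) := by
  set w : (Fin n → ℝ) → ℝ≥0∞ := fun u => ENNReal.ofReal (h u) ^ q
  set L := ‖y - z‖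
  set R := ‖x - z‖
  have hconst : ENNReal.ofReal (2 * L) ≤ ENNReal.ofReal (32 * lam) * ENNReal.ofReal (min L R) := by
    rw [← ENNReal.ofReal_mul (by positivity)]
    refine ENNReal.ofReal_le_ofReal ?_
    have : 0 ≤ L := norm_nonneg _
    have : 0 ≤ R := norm_nonneg _
    rcases min_cases L R with ⟨hmin, _⟩ | ⟨hmin, _⟩ <;> rw [hmin] <;> nlinarith
  have h2L : ENNReal.ofReal (2 * L) = 2 * ENNReal.ofReal L := by
    rw [ENNReal.ofReal_mul zero_le_two, ENNReal.ofReal_ofNat]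
  refine ⟨?_, fun hx hy => ?_⟩
  · calc geoQ n q w y z ≤ ENNReal.ofReal L * (2 * supBallAvg n q w z L) :=
          geoQ_le_norm_mul_supBallAvg w hq y z
      _ = ENNReal.ofReal (2 * L) * supBallAvg n q w z L := by rw [h2L]; ring
      _ ≤ ENNReal.ofReal (32 * lam) * (ENNReal.ofReal (min L R) * supBallAvg n q w z L) := by
          rw [← mul_assoc]; gcongr
      _ ≤ _ := by gcongr; exact min_mul_supBallAvg_le_geoQ w hq x z L
  · have hL : ENNReal.ofReal L ≠ 0 := by simpa [L, sub_eq_zero] using hy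
    calc geoQ n q w x z / ENNReal.ofReal R ≤ 2 * supBallAvg n q w z R := geoQ_div_norm_le w hq hx
      _ ≤ ENNReal.ofReal (32 * lam) *
            (ENNReal.ofReal (min R L) * supBallAvg n q w z R / ENNReal.ofReal L) := by
          rw [← mul_div_assoc, ENNReal.le_div_iff_mul_le (Or.inl hL) (Or.inl ENNReal.ofReal_ne_top),
            ← mul_assoc, min_comm, mul_right_comm, ← h2L]
          gcongr
      _ ≤ _ := by gcongr; exact min_mul_supBallAvg_le_geoQ w hq y z R

theorem stmt_5 (n : ℕ) (q p : ℝ) (hq : (n : ℝ) ≤ q) (hqp : q ≤ p)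
    (h : (Fin n → ℝ) → ℝ) (hh : ∀ u, 0 ≤ h u)
    (hmem : MemLp h (ENNReal.ofReal p) volume)
    (x y z : Fin n → ℝ) (lam : ℝ) (hlam : 1 ≤ lam)
    (hyz : ‖y - z‖ ≤ lam * ‖x - z‖) :
    geoQ n q (fun u => ENNReal.ofReal (h u) ^ q) y z ≤
        ENNReal.ofReal (32 * lam) * geoQ n q (fun u => ENNReal.ofReal (h u) ^ q) x z ∧
      (x ≠ z → y ≠ z →
        geoQ n q (fun u => ENNReal.ofReal (h u) ^ q) x z / ENNReal.ofReal ‖x - z‖ ≤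
          ENNReal.ofReal (32 * lam) *
            (geoQ n q (fun u => ENNReal.ofReal (h u) ^ q) y z / ENNReal.ofReal ‖y - z‖)) :=
  stmt_5_general n q hq h x y z lam hlam hyz
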